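/- Assume C is semiprime. The following are equivalent: (1) C is purified; (2) every minimal prime of C is a regular element; (3) Min(C) = Sp(C); (4) C is mp and every pure element of C is regular. -/

import Mathlib

open CompleteLattice

/-- A complete lattice equipped with a commutator operation, axiomatizing the congruence
lattice of an algebra in a semidegenerate congruence-modular variety whose compact
congruences are closed under the commutator. -/
class CommutatorLattice (C : Type*) [CompleteLattice C] where
  comm : C → C → C
  comm_comm : ∀ a b : C, comm a b = comm b a
  comm_sSup : ∀ (s : Set C) (b : C), comm (sSup s) b = ⨆ a ∈ s, comm a b
  comm_le_inf : ∀ a b : C, comm a b ≤ a ⊓ b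
  comm_top : ∀ a : C, comm a ⊤ = a
  compactlyGenerated : ∀ x : C,
    ∃ s : Set C, (∀ a ∈ s, IsCompactElement a) ∧ sSup s = x
  top_isCompact : IsCompactElement (⊤ : C)
  comm_isCompact : ∀ a b : C, IsCompactElement a → IsCompactElement b →
    IsCompactElement (comm a b)

namespace CommutatorLattice

variable {C : Type*} [CompleteLattice C] [CommutatorLattice C]

/-- The residuation `a → b := ⨆ {c | [a,c] ≤ b}`. -/
def resid (a b : C) : C := sSup {c : C | comm a c ≤ b}

/-- The annihilator `a⊥ := a → ⊥`. -/
def ann (a : C) : C := resid a ⊥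

/-- Iterated commutator: `cpow a n = [a,a]^n`, with the convention `[a,a]^0 = a`.
Note that `[a,b]^n` for `n ≥ 1` equals `cpow (comm a b) (n-1)`. -/
def cpow (a : C) : ℕ → C
  | 0 => a
  | n + 1 => comm (cpow a n) (cpow a n)

/-- Prime elements: `p ≠ ⊤` and `[a,b] ≤ p` implies `a ≤ p` or `b ≤ p`. -/
def IsPrime (p : C) : Prop := p ≠ ⊤ ∧ ∀ a b : C, comm a b ≤ p → a ≤ p ∨ b ≤ p

/-- The radical `ρ(a) := ⨅ {p prime | a ≤ p}`. -/
def radical (a : C) : C := sInf {p : C | IsPrime p ∧ a ≤ p}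

variable (C) in
/-- `C` is semiprime if `ρ(⊥) = ⊥`. -/
def Semiprime : Prop := radical (⊥ : C) = ⊥

variable (C) in
/-- Condition (⋆): for all compact `a`, `b` and all `n ≥ 1` there is `m ≥ 0` with
`[[a,a]^m, [b,b]^m] ≤ [a,b]^n`.  Here `cpow (comm a b) n = [a,b]^(n+1)`, so `n : ℕ`
ranges exactly over the exponents `≥ 1` of the paper. -/
def Star : Prop := ∀ a b : C, IsCompactElement a → IsCompactElement b →
  ∀ n : ℕ, ∃ m : ℕ, comm (cpow a m) (cpow b m) ≤ cpow (comm a b) n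

/-- Pure elements: `t ⊔ a⊥ = ⊤` for every compact `a ≤ t`. -/
def IsPure (t : C) : Prop := ∀ a : C, IsCompactElement a → a ≤ t → t ⊔ ann a = ⊤

/-- w-pure elements: `t ⊔ (a → ρ(⊥)) = ⊤` for every compact `a ≤ t`. -/
def IsWPure (t : C) : Prop :=
  ∀ a : C, IsCompactElement a → a ≤ t → t ⊔ resid a (radical ⊥) = ⊤

/-- Complemented elements. -/
def IsComplEl (a : C) : Prop := ∃ b : C, a ⊔ b = ⊤ ∧ a ⊓ b = ⊥

/-- Regular elements: joins of sets of complemented elements. -/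
def IsRegular (t : C) : Prop := ∃ S : Set C, (∀ a ∈ S, IsComplEl a) ∧ t = sSup S

/-- Max-regular elements: maximal among regular elements distinct from `⊤`. -/
def IsMaxRegular (t : C) : Prop :=
  IsRegular t ∧ t ≠ ⊤ ∧ ∀ u : C, IsRegular u → u ≠ ⊤ → t ≤ u → u = t

/-- Maximal elements of `C \ {⊤}`. -/
def IsMaximal (p : C) : Prop := p ≠ ⊤ ∧ ∀ q : C, q ≠ ⊤ → p ≤ q → q = p

/-- Minimal primes. -/
def IsMinPrime (p : C) : Prop := IsPrime p ∧ ∀ q : C, IsPrime q → q ≤ p → q = p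

variable (C) in
/-- `C` is mp if every prime lies above a unique minimal prime. -/
def MP : Prop := ∀ p : C, IsPrime p → ∃! q : C, IsMinPrime q ∧ q ≤ p

variable (C) in
/-- `C` is PF if `a⊥` is pure for every compact `a`. -/
def PF : Prop := ∀ a : C, IsCompactElement a → IsPure (ann a)

variable (C) in
/-- `C` is PP if `a⊥` is complemented for every compact `a`. -/
def PP : Prop := ∀ a : C, IsCompactElement a → IsComplEl (ann a)

/-- `O(p) := ⨆ {a compact | a⊥ ≰ p}`. -/
def O (p : C) : C := sSup {a : C | IsCompactElement a ∧ ¬ ann a ≤ p}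

variable (C) in
/-- `C` is normal. -/
def Normal : Prop := ∀ t u : C, t ⊔ u = ⊤ →
  ∃ a b : C, t ⊔ a = ⊤ ∧ u ⊔ b = ⊤ ∧ comm a b = ⊥

variable (C) in
/-- `C` is B-normal. -/
def BNormal : Prop := ∀ t u : C, t ⊔ u = ⊤ →
  ∃ a b : C, IsComplEl a ∧ IsComplEl b ∧ t ⊔ a = ⊤ ∧ u ⊔ b = ⊤ ∧ comm a b = ⊥

variable (C) in
/-- `C` is purified. -/
def Purified : Prop := ∀ p q : C, IsMinPrime p → IsMinPrime q → p ≠ q →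
  ∃ a : C, IsComplEl a ∧ a ≤ p ∧ ann a ≤ q

variable (C) in
/-- The prime spectrum of `C`. -/
abbrev Spec := {p : C // IsPrime p}

variable (C) in
/-- The Zariski topology on `Spec C`: the closed sets are the `V(t) = {p | t ≤ p}`,
equivalently the topology generated by the sets `D(t) = {p | t ≰ p}`. -/
def zariskiTop : TopologicalSpace (Spec C) :=
  TopologicalSpace.generateFrom {U : Set (Spec C) | ∃ t : C, U = {p : Spec C | ¬ t ≤ p.1}}

variable (C) in
/-- The flat topology on `Spec C`: generated by the open basis `V(a)`, `a` compact. -/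
def flatTop : TopologicalSpace (Spec C) :=
  TopologicalSpace.generateFrom
    {U : Set (Spec C) | ∃ a : C, IsCompactElement a ∧ U = {p : Spec C | a ≤ p.1}}

/-! In a semiprime lattice `[a,b] = ⊥` forces `a ⊓ b = ⊥`, so joins of complemented elements are
complemented and the complemented elements below `t` form a directed family `B(t)`. With the
compactness of `⊤` and prime avoidance this gives a prime test for regularity: `t` is regular as
soon as every prime above `⨆ B(t)` lies above `t`. Purification makes a minimal prime `p` the only
minimal prime below any prime above `⨆ B(p)`, and it makes pure elements pass the same test: for a
regular minimal prime `q ≱ t`, `t ⊔ q = ⊤` is witnessed by one complemented `f ≤ q`, and `f⊥`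
lies in `B(t)`. Conversely, in an mp lattice minimal primes are pure: if `p ⊔ a⊥` lay below a
prime `m`, then `m` would contain a prime avoiding `a`, and the minimal prime below it would be a
second minimal prime below `m`. -/

instance : IsCompactlyGenerated C := ⟨compactlyGenerated⟩

section Commutator

lemma comm_le_left (a b : C) : comm a b ≤ a := (comm_le_inf a b).trans inf_le_left

lemma comm_le_right (a b : C) : comm a b ≤ b := (comm_le_inf a b).trans inf_le_right

lemma comm_sup_left (a b c : C) : comm (a ⊔ b) c = comm a c ⊔ comm b c := by
  rw [← sSup_pair, comm_sSup, iSup_pair]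

lemma comm_sup_right (a b c : C) : comm a (b ⊔ c) = comm a b ⊔ comm a c := by
  rw [comm_comm, comm_sup_left, comm_comm b, comm_comm c]

lemma comm_mono_left {a a' : C} (b : C) (ha : a ≤ a') : comm a b ≤ comm a' b := by
  rw [← sup_eq_right.mpr ha, comm_sup_left]
  exact le_sup_left

lemma comm_mono {a a' b b' : C} (ha : a ≤ a') (hb : b ≤ b') : comm a b ≤ comm a' b' := by
  refine (comm_mono_left b ha).trans ?_
  rw [comm_comm a' b, comm_comm a' b']
  exact comm_mono_left a' hb

lemma comm_sup_comm_of_sup_eq_top (x : C) {y z : C} (h : y ⊔ z = ⊤) :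
    comm x y ⊔ comm x z = x := by
  rw [← comm_sup_right, h, comm_top]

lemma comm_sup_sup_le (q a b : C) : comm (q ⊔ a) (q ⊔ b) ≤ q ⊔ comm a b := by
  rw [comm_sup_left, comm_sup_right, comm_sup_right]
  exact sup_le (sup_le (le_sup_of_le_left (comm_le_left _ _))
    (le_sup_of_le_left (comm_le_left _ _)))
    (sup_le (le_sup_of_le_left (comm_le_right _ _)) le_sup_right)

lemma comm_ann (a : C) : comm a (ann a) = ⊥ := by
  rw [ann, resid, comm_comm, comm_sSup]
  exact le_bot_iff.mp (iSup₂_le fun c hc => by rw [comm_comm]; exact hc)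

lemma le_ann_iff {a c : C} : c ≤ ann a ↔ comm a c = ⊥ :=
  ⟨fun h => le_bot_iff.mp ((comm_mono le_rfl h).trans (comm_ann a).le),
    fun h => le_sSup (show comm a c ≤ ⊥ from h.le)⟩

lemma ann_le_of_sup_eq_top {x f : C} (h : x ⊔ f = ⊤) : ann f ≤ x := by
  rw [← comm_sup_comm_of_sup_eq_top (ann f) h, comm_comm (ann f) f, comm_ann]
  exact sup_le (comm_le_right _ _) bot_le

lemma IsPrime.le_or_ann_le {P : C} (hP : IsPrime P) (a : C) : a ≤ P ∨ ann a ≤ P :=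
  hP.2 a (ann a) (by rw [comm_ann]; exact bot_le)

end Commutator

section Complemented

omit [CommutatorLattice C] in
lemma isComplEl_bot : IsComplEl (⊥ : C) := ⟨⊤, bot_sup_eq ⊤, bot_inf_eq ⊤⟩

lemma ann_eq_of_sup_eq_top_of_inf_eq_bot {e b : C} (hsup : e ⊔ b = ⊤) (hinf : e ⊓ b = ⊥) :
    ann e = b :=
  le_antisymm (ann_le_of_sup_eq_top (by rwa [sup_comm]))
    (le_ann_iff.mpr (le_bot_iff.mp (hinf ▸ comm_le_inf e b)))

lemma IsComplEl.sup_ann {e : C} (he : IsComplEl e) : e ⊔ ann e = ⊤ := by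
  obtain ⟨b, hsup, hinf⟩ := he
  rwa [ann_eq_of_sup_eq_top_of_inf_eq_bot hsup hinf]

lemma IsComplEl.inf_ann {e : C} (he : IsComplEl e) : e ⊓ ann e = ⊥ := by
  obtain ⟨b, hsup, hinf⟩ := he
  rwa [ann_eq_of_sup_eq_top_of_inf_eq_bot hsup hinf]

lemma IsComplEl.ann_isComplEl {e : C} (he : IsComplEl e) : IsComplEl (ann e) :=
  ⟨e, by rw [sup_comm, he.sup_ann], by rw [inf_comm, he.inf_ann]⟩

lemma IsComplEl.eq_top_of_le {e x : C} (he : IsComplEl e) (hex : e ≤ x) (hx : ann e ≤ x) :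
    x = ⊤ :=
  top_le_iff.mp (he.sup_ann ▸ sup_le hex hx)

lemma IsRegular.le_of_isPrime {u P x : C} (hu : IsRegular u) (hP : IsPrime P) (hx : x ≠ ⊤)
    (hux : u ≤ x) (hPx : P ≤ x) : u ≤ P := by
  obtain ⟨S, hS, rfl⟩ := hu
  refine sSup_le fun e he => (hP.le_or_ann_le e).resolve_right fun hann => hx ?_
  exact (hS e he).eq_top_of_le ((le_sSup he).trans hux) (hann.trans hPx)

omit [CommutatorLattice C] in
lemma IsRegular.sup {u v : C} (hu : IsRegular u) (hv : IsRegular v) : IsRegular (u ⊔ v) := by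
  obtain ⟨S, hS, rfl⟩ := hu
  obtain ⟨T, hT, rfl⟩ := hv
  exact ⟨S ∪ T, fun e he => he.elim (hS e) (hT e), (sSup_union).symm⟩

omit [CommutatorLattice C] in
lemma IsRegular.sSup_isComplEl_le {u : C} (hu : IsRegular u) :
    sSup {e : C | IsComplEl e ∧ e ≤ u} = u := by
  obtain ⟨S, hS, hu⟩ := hu
  refine le_antisymm (sSup_le fun e he => he.2) ?_
  conv_lhs => rw [hu]
  exact sSup_le_sSup fun e he => ⟨hS e he, hu ▸ le_sSup he⟩

end Complemented

section Cpow

lemma cpow_le_self (a : C) : ∀ n, cpow a n ≤ a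
  | 0 => le_rfl
  | n + 1 => (comm_le_left _ _).trans (cpow_le_self a n)

lemma cpow_mono {a b : C} (h : a ≤ b) : ∀ n, cpow a n ≤ cpow b n
  | 0 => h
  | n + 1 => comm_mono (cpow_mono h n) (cpow_mono h n)

lemma cpow_antitone (a : C) : Antitone (cpow a) :=
  antitone_nat_of_succ_le fun _ => comm_le_left _ _

lemma cpow_isCompact {a : C} (h : IsCompactElement a) : ∀ n, IsCompactElement (cpow a n)
  | 0 => h
  | n + 1 => comm_isCompact _ _ (cpow_isCompact h n) (cpow_isCompact h n)

lemma cpow_inf_le_comm_cpow (x y : C) (j k : ℕ) :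
    cpow (x ⊓ y) (max j k + 1) ≤ comm (cpow x j) (cpow y k) :=
  comm_mono ((cpow_mono inf_le_left _).trans (cpow_antitone x (le_max_left j k)))
    ((cpow_mono inf_le_right _).trans (cpow_antitone y (le_max_right j k)))

end Cpow

section Primes

lemma exists_isPrime_avoiding {S : Set C} (hS : ∀ s ∈ S, IsCompactElement s) (hne : S.Nonempty)
    (hmul : ∀ s ∈ S, ∀ t ∈ S, ∃ u ∈ S, u ≤ comm s t) {x : C} (hx : ∀ s ∈ S, ¬ s ≤ x) :
    ∃ q : C, IsPrime q ∧ x ≤ q ∧ ∀ s ∈ S, ¬ s ≤ q := by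
  have hchain : ∀ c ⊆ {y : C | ∀ s ∈ S, ¬ s ≤ y}, IsChain (· ≤ ·) c → ∀ y ∈ c,
      ∃ ub ∈ {y : C | ∀ s ∈ S, ¬ s ≤ y}, ∀ z ∈ c, z ≤ ub := by
    refine fun c hcS hc y hy => ⟨sSup c, fun s hs hle => ?_, fun z hz => le_sSup hz⟩
    obtain ⟨z, hzc, hsz⟩ :=
      (isCompactElement_iff_le_of_directed_sSup_le _ s).mp (hS s hs) c ⟨y, hy⟩ hc.directedOn hle
    exact hcS hzc s hs hsz
  obtain ⟨q, hxq, hq⟩ := zorn_le_nonempty₀ _ hchain x hx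
  have hmeets : ∀ a : C, ¬ a ≤ q → ∃ s ∈ S, s ≤ q ⊔ a := fun a ha => by
    by_contra! h
    exact ha (le_sup_right.trans (hq.2 h le_sup_left))
  refine ⟨q, ⟨fun htop => ?_, fun a b hab => ?_⟩, hxq, hq.1⟩
  · obtain ⟨s, hs⟩ := hne
    exact hq.1 s hs (htop ▸ le_top)
  · by_contra! hq'
    obtain ⟨s, hs, hsa⟩ := hmeets a hq'.1
    obtain ⟨t, ht, htb⟩ := hmeets b hq'.2
    obtain ⟨u, hu, hust⟩ := hmul s hs t ht
    exact hq.1 u hu (hust.trans ((comm_mono hsa htb).trans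
      ((comm_sup_sup_le q a b).trans (sup_le le_rfl hab))))

lemma exists_isPrime_ge {x : C} (hx : x ≠ ⊤) : ∃ P : C, IsPrime P ∧ x ≤ P := by
  obtain ⟨P, hP, hxP, -⟩ := exists_isPrime_avoiding (S := {⊤})
    (by simpa using top_isCompact) ⟨⊤, rfl⟩ (by simp [comm_top]) (x := x)
    (by simpa [top_le_iff] using hx)
  exact ⟨P, hP, hxP⟩

lemma isPrime_sInf_of_isChain {T : Set C} (hne : T.Nonempty) (hT : IsChain (· ≤ ·) T)
    (hprime : ∀ q ∈ T, IsPrime q) : IsPrime (sInf T) := by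
  obtain ⟨y, hy⟩ := hne
  refine ⟨fun htop => (hprime y hy).1 (top_le_iff.mp (htop ▸ sInf_le hy)), fun a b hab => ?_⟩
  by_contra! h
  obtain ⟨r, hr, har⟩ : ∃ r ∈ T, ¬ a ≤ r := by simpa [le_sInf_iff] using h.1
  obtain ⟨r', hr', hbr'⟩ : ∃ r ∈ T, ¬ b ≤ r := by simpa [le_sInf_iff] using h.2
  rcases hT.total hr hr' with hrr' | hr'r
  · exact ((hprime r hr).2 a b (hab.trans (sInf_le hr))).elim har
      fun hb => hbr' (hb.trans hrr')
  · exact ((hprime r' hr').2 a b (hab.trans (sInf_le hr'))).elim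
      (fun ha => har (ha.trans hr'r)) hbr'

lemma exists_isMinPrime_le {p : C} (hp : IsPrime p) : ∃ q : C, IsMinPrime q ∧ q ≤ p := by
  have hchain : ∀ c ⊆ {x : Cᵒᵈ | IsPrime x.ofDual ∧ x.ofDual ≤ p}, IsChain (· ≤ ·) c →
      ∀ y ∈ c, ∃ ub ∈ {x : Cᵒᵈ | IsPrime x.ofDual ∧ x.ofDual ≤ p}, ∀ z ∈ c, z ≤ ub :=
    fun c hcS hc y hy => ⟨sSup c,
      ⟨isPrime_sInf_of_isChain ⟨y, hy⟩ hc.symm fun q hq => (hcS hq).1,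
        (sInf_le (α := C) hy).trans (hcS hy).2⟩,
      fun _ hz => le_sSup hz⟩
  obtain ⟨q, -, hq⟩ := zorn_le_nonempty₀ _ hchain (OrderDual.toDual p) ⟨hp, le_rfl⟩
  exact ⟨q.ofDual, ⟨hq.1.1, fun r hr hrq => le_antisymm hrq (hq.2 ⟨hr, hrq.trans hq.1.2⟩ hrq)⟩,
    hq.1.2⟩

end Primes

namespace Semiprime

lemma eq_bot_of_comm_self_eq_bot (hsp : Semiprime C) {x : C} (h : comm x x = ⊥) : x = ⊥ := by
  refine le_bot_iff.mp (le_trans ?_ hsp.le)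
  exact le_sInf fun P hP => (hP.1.2 x x (h ▸ bot_le)).elim id id

lemma inf_eq_bot_of_comm_eq_bot (hsp : Semiprime C) {a b : C} (h : comm a b = ⊥) :
    a ⊓ b = ⊥ :=
  hsp.eq_bot_of_comm_self_eq_bot (le_bot_iff.mp (h ▸ comm_mono inf_le_left inf_le_right))

lemma eq_bot_of_cpow_eq_bot (hsp : Semiprime C) : ∀ {n : ℕ} {x : C}, cpow x n = ⊥ → x = ⊥
  | 0, _, h => h
  | _ + 1, _, h => hsp.eq_bot_of_cpow_eq_bot (hsp.eq_bot_of_comm_self_eq_bot h)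

lemma isComplEl_sup (hsp : Semiprime C) {e f : C} (he : IsComplEl e) (hf : IsComplEl f) :
    IsComplEl (e ⊔ f) := by
  refine ⟨ann e ⊓ ann f, ?_, hsp.inf_eq_bot_of_comm_eq_bot ?_⟩
  · have hann : ann e ≤ f ⊔ ann e ⊓ ann f :=
      calc ann e = comm (ann e) f ⊔ comm (ann e) (ann f) :=
            (comm_sup_comm_of_sup_eq_top (ann e) hf.sup_ann).symm
        _ ≤ f ⊔ ann e ⊓ ann f := sup_le_sup (comm_le_right _ _) (comm_le_inf _ _)
    rw [eq_top_iff, ← he.sup_ann, sup_assoc]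
    exact sup_le_sup_left hann e
  · rw [comm_sup_left]
    exact le_bot_iff.mp (sup_le ((comm_mono le_rfl inf_le_left).trans (comm_ann e).le)
      ((comm_mono le_rfl inf_le_right).trans (comm_ann f).le))

lemma directedOn_isComplEl_le (hsp : Semiprime C) (t : C) :
    DirectedOn (· ≤ ·) {e : C | IsComplEl e ∧ e ≤ t} := fun e he f hf =>
  ⟨e ⊔ f, ⟨hsp.isComplEl_sup he.1 hf.1, sup_le he.2 hf.2⟩, le_sup_left, le_sup_right⟩

lemma le_of_cpow_le (hsp : Semiprime C) {a e : C} (he : IsComplEl e) {n : ℕ}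
    (h : cpow a n ≤ e) : a ≤ e := by
  have hbot : a ⊓ ann e = ⊥ := by
    refine hsp.eq_bot_of_cpow_eq_bot (n := n) (le_bot_iff.mp ?_)
    rw [← he.inf_ann]
    exact le_inf ((cpow_mono inf_le_left n).trans h) ((cpow_le_self _ n).trans inf_le_right)
  calc a = comm a e ⊔ comm a (ann e) := (comm_sup_comm_of_sup_eq_top a he.sup_ann).symm
    _ ≤ e ⊔ a ⊓ ann e := sup_le_sup (comm_le_right _ _) (comm_le_inf _ _)
    _ = e := by rw [hbot, sup_bot_eq]

lemma isRegular_of_forall_isPrime (hsp : Semiprime C) {t : C}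
    (h : ∀ P : C, IsPrime P → sSup {e : C | IsComplEl e ∧ e ≤ t} ≤ P → t ≤ P) :
    IsRegular t := by
  set B := {e : C | IsComplEl e ∧ e ≤ t}
  refine ⟨B, fun e he => he.1, le_antisymm ?_ (sSup_le fun e he => he.2)⟩
  refine le_iff_compact_le_imp.mpr fun a ha hat => ?_
  have hcpow : ∀ n, cpow a n ≤ sSup B → a ≤ sSup B := fun n hn => by
    obtain ⟨e, he, hne⟩ := (isCompactElement_iff_le_of_directed_sSup_le _ _).mp
      (cpow_isCompact ha n) B ⟨⊥, isComplEl_bot, bot_le⟩ (hsp.directedOn_isComplEl_le t) hn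
    exact (hsp.le_of_cpow_le he.1 hne).trans (le_sSup he)
  by_contra haB
  obtain ⟨P, hP, hBP, hPa⟩ := exists_isPrime_avoiding (S := Set.range (cpow a))
    (by rintro _ ⟨n, rfl⟩; exact cpow_isCompact ha n) ⟨a, 0, rfl⟩
    (by rintro _ ⟨j, rfl⟩ _ ⟨k, rfl⟩
        exact ⟨_, ⟨max j k + 1, rfl⟩, by simpa using cpow_inf_le_comm_cpow a a j k⟩)
    (by rintro _ ⟨n, rfl⟩ hn; exact haB (hcpow n hn))
  exact hPa a ⟨0, rfl⟩ (hat.trans (h P hP hBP))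

/-- The lattice version of "if `ann a ⊆ m`, then `(C \ m) · {aⁿ}` avoids `0`": the iterated
commutators of the `[c,a]` with `c ≰ m` (among them `a = [⊤,a]`) form an m-system avoiding `⊥`. -/
lemma exists_isPrime_le_not_le (hsp : Semiprime C) {m a : C} (hm : IsPrime m)
    (ha : IsCompactElement a) (hann : ann a ≤ m) : ∃ q : C, IsPrime q ∧ q ≤ m ∧ ¬ a ≤ q := by
  set S := {x : C | ∃ c, IsCompactElement c ∧ ¬ c ≤ m ∧ ∃ n, cpow (comm c a) n = x}
  have haS : a ∈ S :=
    ⟨⊤, top_isCompact, fun h => hm.1 (top_le_iff.mp h), 0, by rw [comm_comm]; exact comm_top a⟩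
  obtain ⟨q, hq, -, hqS⟩ := exists_isPrime_avoiding (S := S) (x := ⊥)
    (by rintro _ ⟨c, hc, -, n, rfl⟩; exact cpow_isCompact (comm_isCompact c a hc ha) n)
    ⟨a, haS⟩
    (by
      rintro _ ⟨c, hc, hcm, j, rfl⟩ _ ⟨d, hd, hdm, k, rfl⟩
      refine ⟨_, ⟨comm c d, comm_isCompact c d hc hd, fun h => (hm.2 c d h).elim hcm hdm,
        max j k + 1, rfl⟩, (cpow_mono ?_ _).trans (cpow_inf_le_comm_cpow _ _ j k)⟩
      exact le_inf (comm_mono_left a (comm_le_left c d)) (comm_mono_left a (comm_le_right c d)))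
    (by
      rintro _ ⟨c, -, hcm, n, rfl⟩ hbot
      refine hcm ((le_ann_iff.mpr ?_).trans hann)
      rw [comm_comm]
      exact hsp.eq_bot_of_cpow_eq_bot (le_bot_iff.mp hbot))
  refine ⟨q, hq, le_iff_compact_le_imp.mpr fun c hc hcq => ?_, hqS a haS⟩
  by_contra hcm
  exact hqS _ ⟨c, hc, hcm, 0, rfl⟩ ((comm_le_left c a).trans hcq)

lemma exists_isComplEl_sup_eq_top (hsp : Semiprime C) {q x : C} (hq : IsRegular q)
    (h : x ⊔ q = ⊤) : ∃ f : C, IsComplEl f ∧ f ≤ q ∧ x ⊔ f = ⊤ := by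
  set B := {e : C | IsComplEl e ∧ e ≤ q}
  have hsup : sSup ((x ⊔ ·) '' B) = ⊤ := by
    rw [sSup_image, ← sup_biSup ⟨⊥, isComplEl_bot, bot_le⟩, ← sSup_eq_iSup,
      hq.sSup_isComplEl_le, h]
  obtain ⟨_, ⟨f, hf, rfl⟩, hxf⟩ := (isCompactElement_iff_le_of_directed_sSup_le _ _).mp
    top_isCompact ((x ⊔ ·) '' B) ⟨x ⊔ ⊥, ⊥, ⟨isComplEl_bot, bot_le⟩, rfl⟩
    ((hsp.directedOn_isComplEl_le q).mono_comp fun _ _ h => sup_le_sup_left h x) hsup.ge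
  exact ⟨f, hf.1, hf.2, top_le_iff.mp hxf⟩

end Semiprime

lemma Purified.isRegular_of_isMinPrime (hpur : Purified C) (hsp : Semiprime C) {p : C}
    (hp : IsMinPrime p) : IsRegular p := by
  refine hsp.isRegular_of_forall_isPrime fun P hP hBP => ?_
  obtain ⟨q, hq, hqP⟩ := exists_isMinPrime_le hP
  obtain rfl | hpq := eq_or_ne p q
  · exact hqP
  obtain ⟨e, he, hep, hannq⟩ := hpur p q hp hq hpq
  have heP : e ≤ P := (le_sSup (s := {e : C | IsComplEl e ∧ e ≤ p}) ⟨he, hep⟩).trans hBP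
  exact absurd (he.eq_top_of_le heP (hannq.trans hqP)) hP.1

lemma purified_of_forall_isRegular (h : ∀ p : C, IsMinPrime p → IsRegular p) : Purified C := by
  intro p q hp hq hpq
  obtain ⟨S, hS, rfl⟩ := h p hp
  obtain ⟨e, he, heq⟩ : ∃ e ∈ S, ¬ e ≤ q := by
    by_contra! hSq
    exact hpq (hq.2 _ hp.1 (sSup_le hSq))
  exact ⟨e, hS e he, le_sSup he, (hq.1.le_or_ann_le e).resolve_left heq⟩

lemma setOf_isMinPrime_eq_setOf_isMaxRegular (h : ∀ p : C, IsMinPrime p → IsRegular p) :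
    {p : C | IsMinPrime p} = {p : C | IsMaxRegular p} := by
  ext t
  refine ⟨fun ht => ⟨h t ht, ht.1.1, fun u hu hu' htu =>
    le_antisymm (hu.le_of_isPrime ht.1 hu' le_rfl htu) htu⟩, fun ht => ?_⟩
  obtain ⟨m, hm, htm⟩ := exists_isPrime_ge ht.2.1
  obtain ⟨q, hq, hqm⟩ := exists_isMinPrime_le hm
  have hqt : q ≤ t := le_sup_right.trans
    (ht.2.2 _ (ht.1.sup (h q hq)) (ne_top_of_le_ne_top hm.1 (sup_le htm hqm)) le_sup_left).le
  have htq : t ≤ q := ht.1.le_of_isPrime hq.1 hm.1 htm hqm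
  exact le_antisymm htq hqt ▸ hq

lemma mp_of_purified (hpur : Purified C) : MP C := by
  intro P hP
  obtain ⟨q, hq, hqP⟩ := exists_isMinPrime_le hP
  refine ⟨q, ⟨hq, hqP⟩, fun q' ⟨hq', hq'P⟩ => ?_⟩
  by_contra hne
  obtain ⟨e, he, heq', hannq⟩ := hpur q' q hq' hq hne
  exact hP.1 (he.eq_top_of_le (heq'.trans hq'P) (hannq.trans hqP))

lemma isRegular_of_isPure (hsp : Semiprime C) (hreg : ∀ p : C, IsMinPrime p → IsRegular p)
    {t : C} (ht : IsPure t) : IsRegular t := by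
  refine hsp.isRegular_of_forall_isPrime fun P hP hBP => ?_
  obtain ⟨q, hq, hqP⟩ := exists_isMinPrime_le hP
  refine le_trans (le_iff_compact_le_imp.mpr fun a ha hat => ?_) hqP
  by_contra haq
  have htq : t ⊔ q = ⊤ := top_le_iff.mp <| (ht a ha hat).ge.trans
    (sup_le_sup_left ((hq.1.le_or_ann_le a).resolve_left haq) t)
  obtain ⟨f, hf, hfq, htf⟩ := hsp.exists_isComplEl_sup_eq_top (hreg q hq) htq
  have hannf : ann f ≤ P :=
    (le_sSup (s := {e : C | IsComplEl e ∧ e ≤ t})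
      ⟨hf.ann_isComplEl, ann_le_of_sup_eq_top htf⟩).trans hBP
  exact hP.1 (hf.eq_top_of_le (hfq.trans hqP) hannf)

lemma MP.isPure_of_isMinPrime (hmp : MP C) (hsp : Semiprime C) {p : C} (hp : IsMinPrime p) :
    IsPure p := by
  intro a ha hap
  by_contra hne
  obtain ⟨m, hm, hpm⟩ := exists_isPrime_ge hne
  obtain ⟨q, hq, hqm, haq⟩ := hsp.exists_isPrime_le_not_le hm ha (le_sup_right.trans hpm)
  obtain ⟨q₀, hq₀, hq₀q⟩ := exists_isMinPrime_le hq
  have hq₀p : q₀ = p := (hmp m hm).unique ⟨hq₀, hq₀q.trans hqm⟩ ⟨hp, le_sup_left.trans hpm⟩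
  exact haq (hap.trans (hq₀p ▸ hq₀q))

theorem statement17 (h : Semiprime C) :
    (Purified C ↔ ∀ p : C, IsMinPrime p → IsRegular p) ∧
    (Purified C ↔ {p : C | IsMinPrime p} = {p : C | IsMaxRegular p}) ∧
    (Purified C ↔ MP C ∧ ∀ t : C, IsPure t → IsRegular t) := by
  have hreg : Purified C → ∀ p : C, IsMinPrime p → IsRegular p :=
    fun hpur _ hp => hpur.isRegular_of_isMinPrime h hp
  refine ⟨⟨hreg, purified_of_forall_isRegular⟩, ⟨?_, ?_⟩, ⟨?_, ?_⟩⟩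
  · exact fun hpur => setOf_isMinPrime_eq_setOf_isMaxRegular (hreg hpur)
  · exact fun hSp => purified_of_forall_isRegular fun p hp => ((Set.ext_iff.mp hSp p).mp hp).1
  · exact fun hpur => ⟨mp_of_purified hpur, fun _ ht => isRegular_of_isPure h (hreg hpur) ht⟩
  · rintro ⟨hmp, hpure⟩
    exact purified_of_forall_isRegular fun p hp => hpure p (hmp.isPure_of_isMinPrime h hp)

end CommutatorLattice
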